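/- Let S be a finite totally ordered set and P an attractive, translation-invariant, ergodic PCA dynamics on S^{Z^d} with unique stationary measure ν, and let ρ(n) be the probability, under the increasing coupling P ⪯⊗ P started from (−, +), that the two components disagree at site 0 at time n. Then for every continuous function f on S^{Z^d} with |||f||| = Σ_{k∈Z^d} Var_k(f) < ∞ and every n ≥ 1: sup_σ |P(f(ω(n)) | ω(0) = σ) − ν(f)| ≤ 2 |||f||| ρ(n). -/

import Mathlib

open MeasureTheory ProbabilityTheory Filter

abbrev Site (d : ℕ) : Type := Fin d → ℤ
abbrev Config (d : ℕ) (S : Type*) : Type _ := Site d → S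

/-- Stochastic ordering of measures: `ν₁ ⪯ ν₂` iff `ν₁(f) ≤ ν₂(f)` for every
bounded measurable increasing `f`. -/
def StochLE {α : Type*} [MeasurableSpace α] [Preorder α] (μ ν : Measure α) : Prop :=
  ∀ f : α → ℝ, Measurable f → Monotone f → (∃ C, ∀ x, |f x| ≤ C) →
    ∫ x, f x ∂μ ≤ ∫ x, f x ∂ν

/-- A (local) PCA dynamics on `S^{ℤ^d}`: a Markov kernel together with its family of
local updating rules, the kernel being the product over sites of the updating rules. -/
structure PCA (d : ℕ) (S : Type*) [MeasurableSpace S] where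
  rule : Site d → Config d S → Measure S
  rule_prob : ∀ k η, IsProbabilityMeasure (rule k η)
  rule_local : ∀ k : Site d, ∃ V : Finset (Site d), ∀ η η' : Config d S,
      (∀ j ∈ V, η j = η' j) → rule k η = rule k η'
  toKernel : Kernel (Config d S) (Config d S)
  markov : IsMarkovKernel toKernel
  product : ∀ (η : Config d S) (Λ : Finset (Site d)) (y : Site d → S),
      toKernel η {σ : Config d S | ∀ k ∈ Λ, σ k = y k} = ∏ k ∈ Λ, rule k η {y k}


/-- An `N`-tuple of PCA dynamics is increasing if ordered configurations give
stochastically ordered transition measures. -/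
def IncreasingTuple {d : ℕ} {S : Type*} [MeasurableSpace S] [Preorder S] {N : ℕ}
    (P : Fin N → PCA d S) : Prop :=
  ∀ ζ : Fin N → Config d S, Monotone ζ →
    ∀ i j : Fin N, i ≤ j → StochLE ((P i).toKernel (ζ i)) ((P j).toKernel (ζ j))

/-- A PCA dynamics is attractive if it maps bounded measurable increasing functions to
increasing functions. -/
def Attractive {d : ℕ} {S : Type*} [MeasurableSpace S] [Preorder S] (P : PCA d S) : Prop :=
  ∀ f : Config d S → ℝ, Measurable f → Monotone f → (∃ C, ∀ x, |f x| ≤ C) →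
    Monotone fun η => ∫ σ, f σ ∂(P.toKernel η)

/-- The maximal element of a nonempty finite linear order. -/
noncomputable def topS (S : Type*) [Fintype S] [LinearOrder S] [Nonempty S] : S :=
  Finset.univ.max' Finset.univ_nonempty


/-- The minimal element of a nonempty finite linear order. -/
noncomputable def botS (S : Type*) [Fintype S] [LinearOrder S] [Nonempty S] : S :=
  Finset.univ.min' Finset.univ_nonempty


/-- The Lévy (generalised inverse) probability transform of the distribution function of
a measure on a finite linear order: `t ↦ min {s : F(s) ≥ t}`. -/
noncomputable def levyInv {S : Type*} [Fintype S] [LinearOrder S] [Nonempty S]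
    [MeasurableSpace S] (μ : Measure S) (t : ℝ) : S :=
  letI := Classical.decPred fun s : S => t ≤ (μ {s' | s' ≤ s}).toReal
  if h : (Finset.univ.filter fun s : S => t ≤ (μ {s' | s' ≤ s}).toReal).Nonempty then
    (Finset.univ.filter fun s : S => t ≤ (μ {s' | s' ≤ s}).toReal).min' h
  else Classical.arbitrary S


/-- The increasing coupling of two probability measures on a finite linear order:
the joint law of `((F_μ)⁻¹(U), (F_ν)⁻¹(U))` for a single uniform `U` on `(0,1)`. -/
noncomputable def couple {S : Type*} [Fintype S] [LinearOrder S] [Nonempty S]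
    [MeasurableSpace S] (μ ν : Measure S) : Measure (S × S) :=
  (volume.restrict (Set.Ioo (0 : ℝ) 1)).map fun t => (levyInv μ t, levyInv ν t)


/-- The law at time `n` of the Markov chain with transition kernel `K` and initial law `μ`. -/
noncomputable def iterLaw {α : Type*} [MeasurableSpace α] (K : Kernel α α) (μ : Measure α) :
    ℕ → Measure α
  | 0 => μ
  | n + 1 => (iterLaw K μ n).bind fun a => K a


/-- Translation invariance (space homogeneity) of a PCA dynamics. -/
def TranslationInvariant {d : ℕ} {S : Type*} [MeasurableSpace S] (P : PCA d S) : Prop :=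
  ∀ (k : Site d) (η : Config d S), P.rule k η = P.rule 0 fun x => η (x + k)


/-- The oscillation of `f` at the site `k`. -/
noncomputable def varAt {d : ℕ} {S : Type*} (f : Config d S → ℝ) (k : Site d) : ℝ :=
  sSup {r | ∃ σ η : Config d S, (∀ k' : Site d, k' ≠ k → σ k' = η k') ∧ r = |f σ - f η|}

/-!
Couple the chain started from `σ` with the one started from `+` by the increasing coupling
started from `(σ, +)`. Attractiveness keeps the coupled pair ordered, so a disagreement at a
site `k` is a strict inequality there; that event is increasing for the nesting order of pairs,
for which `(−, +)` is the top, so its probability is at most the one from `(−, +)`, which is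
`ρ(n)` by translation invariance. Changing `f` at the disagreeing sites one at a time costs
`Var_k f` each, hence the two laws differ on `f` by at most `|||f||| ρ(n)`. The same bound
compares `P^n(+)` with `P^{m+n}(+)` (couple from `(P^m(+), +)`), and ergodicity lets `m → ∞`.
-/

open Set Filter Topology
open scoped ENNReal

instance : IsProbabilityMeasure (volume.restrict (Ioo (0 : ℝ) 1)) :=
  ⟨by simp⟩

lemma measurable_of_measurableSet_le {α β : Type*} [MeasurableSpace α] [LinearOrder β] [Finite β]
    [MeasurableSpace β] {g : α → β} (h : ∀ b, MeasurableSet {a | g a ≤ b}) : Measurable g := by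
  refine measurable_to_countable' fun b => ?_
  have : g ⁻¹' {b} = {a | g a ≤ b} ∩ ⋂ b' ∈ {b' | b' < b}, {a | g a ≤ b'}ᶜ := by
    ext a
    simp only [mem_preimage, mem_singleton_iff, mem_inter_iff, mem_iInter, mem_compl_iff]
    refine ⟨fun h => ⟨h.le, fun b' hb' h' => (h ▸ hb' : b' < g a).not_ge h'⟩,
      fun ⟨h1, h2⟩ => h1.antisymm (not_lt.1 fun hlt => h2 _ hlt le_rfl)⟩
  rw [this]
  exact (h b).inter (.biInter (Set.to_countable _) fun b' _ => (h b').compl)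

lemma ext_of_Iic_of_finite {S : Type*} [Fintype S] [LinearOrder S] [MeasurableSpace S]
    [MeasurableSingletonClass S] (μ ν : Measure S) [IsFiniteMeasure μ]
    (h : ∀ s, μ (Iic s) = ν (Iic s)) : μ = ν := by
  refine Measure.ext_of_singleton fun s => ?_
  induction s using WellFoundedLT.induction with
  | ind s ih =>
    have hIio : μ (Iio s) = ν (Iio s) := by
      classical
      have hfin : Iio s = ↑(Finset.univ.filter (· < s)) := by ext; simp
      rw [hfin, ← sum_measure_singleton, ← sum_measure_singleton]
      exact Finset.sum_congr rfl fun y hy => ih y (Finset.mem_filter.1 hy).2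
    have hsplit : ∀ m : Measure S, m (Iic s) = m (Iio s) + m {s} := fun m => by
      rw [← Iio_union_right, measure_union (by simp) (measurableSet_singleton s)]
    have := h s
    rw [hsplit, hsplit, hIio] at this
    exact (ENNReal.add_right_inj (by rw [← hIio]; finiteness)).1 this

section LevyInverse

variable {S : Type*} [Fintype S] [LinearOrder S] [Nonempty S]

lemma le_topS (s : S) : s ≤ topS S := Finset.le_max' _ s (Finset.mem_univ s)

lemma botS_le (s : S) : botS S ≤ s := Finset.min'_le _ s (Finset.mem_univ s)

variable [MeasurableSpace S] {μ ν : Measure S} [IsProbabilityMeasure μ] {t : ℝ} {s : S}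

lemma levyInv_le_iff (ht : t ≤ 1) : levyInv μ t ≤ s ↔ t ≤ (μ (Iic s)).toReal := by
  have hF : Monotone fun s : S => (μ (Iic s)).toReal := fun a b hab =>
    ENNReal.toReal_mono (measure_ne_top μ _) (measure_mono (Iic_subset_Iic.2 hab))
  have htop : t ≤ (μ (Iic (topS S))).toReal := by
    rwa [show Iic (topS S) = univ from eq_univ_of_forall le_topS, measure_univ,
      ENNReal.toReal_one]
  unfold levyInv
  split_ifs with hne
  · constructor
    · intro h
      exact (Finset.mem_filter.1 (Finset.min'_mem _ hne)).2.trans (hF h)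
    · exact fun h => Finset.min'_le _ s (Finset.mem_filter.2 ⟨Finset.mem_univ _, h⟩)
  · exact absurd ⟨topS S, Finset.mem_filter.2 ⟨Finset.mem_univ _, htop⟩⟩ hne

lemma levyInv_of_one_lt (ht : 1 < t) : levyInv μ t = Classical.arbitrary S := by
  classical
  rw [levyInv, dif_neg]
  rintro ⟨b, hb⟩
  exact ((Finset.mem_filter.1 hb).2.trans (ENNReal.toReal_le_of_le_ofReal zero_le_one
    (by simpa using prob_le_one))).not_gt ht

lemma levyInv_mono [IsProbabilityMeasure ν] (h : ∀ s, ν (Iic s) ≤ μ (Iic s)) (t : ℝ) :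
    levyInv μ t ≤ levyInv ν t := by
  rcases le_or_gt t 1 with ht | ht
  · rw [levyInv_le_iff ht]
    exact ((levyInv_le_iff ht).1 le_rfl).trans (ENNReal.toReal_mono (measure_ne_top μ _) (h _))
  · rw [levyInv_of_one_lt ht, levyInv_of_one_lt ht]

@[fun_prop]
lemma measurable_levyInv : Measurable (levyInv μ) := by
  refine measurable_of_measurableSet_le fun s => ?_
  have : {t | levyInv μ t ≤ s} = {t | t ≤ 1 ∧ t ≤ (μ (Iic s)).toReal} ∪
      {t | 1 < t ∧ Classical.arbitrary S ≤ s} := by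
    ext t
    rcases le_or_gt t 1 with ht | ht
    · simp [levyInv_le_iff ht, ht, not_lt.2 ht]
    · simp [levyInv_of_one_lt ht, ht, not_le.2 ht]
  rw [this]
  exact (measurableSet_Iic.inter measurableSet_Iic).union
    (measurableSet_Ioi.inter (MeasurableSet.const _))

lemma map_levyInv [MeasurableSingletonClass S] :
    (volume.restrict (Ioo (0 : ℝ) 1)).map (levyInv μ) = μ := by
  refine (ext_of_Iic_of_finite _ _ fun s => ?_).symm
  rw [Measure.map_apply measurable_levyInv MeasurableSet.of_discrete,
    Measure.restrict_congr_set Ioo_ae_eq_Ioc, Measure.restrict_apply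
      (measurable_levyInv (MeasurableSet.of_discrete))]
  have : levyInv μ ⁻¹' Iic s ∩ Ioc 0 1 = Ioc 0 1 ∩ Iic (μ (Iic s)).toReal := by
    ext t
    simp only [mem_inter_iff, mem_preimage, mem_Iic, mem_Ioc]
    constructor
    · rintro ⟨h, h0, h1⟩; exact ⟨⟨h0, h1⟩, (levyInv_le_iff h1).1 h⟩
    · rintro ⟨⟨h0, h1⟩, h⟩; exact ⟨(levyInv_le_iff h1).2 h, h0, h1⟩
  rw [this, Ioc_inter_Iic, Real.volume_Ioc, sub_zero, min_eq_right
    (ENNReal.toReal_le_of_le_ofReal zero_le_one (by simpa using prob_le_one)),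
    ENNReal.ofReal_toReal (measure_ne_top μ _)]

end LevyInverse

section ProductMeasure

open Measure

lemma eq_infinitePi_of_cylinder {ι A : Type*} [Fintype A] [Nonempty A] [MeasurableSpace A]
    [MeasurableSingletonClass A] {μ : ι → Measure A} [∀ i, IsProbabilityMeasure (μ i)]
    {ν : Measure (ι → A)}
    (h : ∀ (Λ : Finset ι) (y : ι → A), ν {σ | ∀ i ∈ Λ, σ i = y i} = ∏ i ∈ Λ, μ i {y i}) :
    ν = infinitePi μ := by
  refine ((isProjectiveLimit_infinitePi μ).unique fun Λ => ?_).symm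
  classical
  refine Measure.ext_of_singleton fun y => ?_
  let y' : ι → A := fun i => if hi : i ∈ Λ then y ⟨i, hi⟩ else Classical.arbitrary A
  have hpre : (Λ.restrict : (ι → A) → _) ⁻¹' {y} = {σ | ∀ i ∈ Λ, σ i = y' i} := by
    ext σ
    simp +contextual [funext_iff, y']
  rw [Measure.map_apply (Finset.measurable_restrict Λ) (measurableSet_singleton y), hpre, h,
    Measure.pi_singleton, ← Finset.prod_coe_sort]
  simp [y']

lemma infinitePi_map_comp_equiv {κ ι X : Type*} [MeasurableSpace X] (μ : ι → Measure X)
    [∀ i, IsProbabilityMeasure (μ i)] (e : κ ≃ ι) :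
    (infinitePi μ).map (fun σ => σ ∘ e) = infinitePi fun k => μ (e k) := by
  refine eq_infinitePi _ fun s t ht => ?_
  have hpre : (fun σ : ι → X => σ ∘ e) ⁻¹' (s : Set κ).pi t =
      (s.map e.toEmbedding : Set ι).pi fun i => t (e.symm i) := by
    ext σ
    simp only [mem_preimage, Finset.coe_map, Set.mem_pi, Set.mem_image, Finset.mem_coe,
      Function.comp_apply, Equiv.coe_toEmbedding, forall_exists_index, and_imp,
      forall_apply_eq_imp_iff₂, Equiv.symm_apply_apply]
  rw [Measure.map_apply (by fun_prop) (.pi s.countable_toSet fun k _ => ht k), hpre,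
    infinitePi_pi _ fun i _ => ht _, Finset.prod_map]
  simp

lemma measurableSet_setOf_apply {ι A : Type*} [MeasurableSpace A] [DiscreteMeasurableSpace A]
    (i : ι) (p : A → Prop) : MeasurableSet {σ : ι → A | p (σ i)} :=
  measurable_pi_apply i (MeasurableSet.of_discrete (s := {a | p a}))

end ProductMeasure

namespace PCA

variable {d : ℕ} {A : Type*} [MeasurableSpace A] (R : PCA d A)

instance (k : Site d) (η : Config d A) : IsProbabilityMeasure (R.rule k η) := R.rule_prob k η

instance : IsMarkovKernel R.toKernel := R.markov

variable [Fintype A] [Nonempty A] [MeasurableSingletonClass A]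

lemma toKernel_eq_infinitePi (η : Config d A) :
    R.toKernel η = Measure.infinitePi fun k => R.rule k η :=
  eq_infinitePi_of_cylinder (R.product η)

lemma map_eval_toKernel (η : Config d A) (k : Site d) :
    (R.toKernel η).map (fun σ => σ k) = R.rule k η := by
  rw [toKernel_eq_infinitePi]
  exact Measure.infinitePi_map_eval _ k

lemma map_shift_toKernel (hR : TranslationInvariant R) (k : Site d) (η : Config d A) :
    (R.toKernel η).map (fun σ x => σ (x + k)) = R.toKernel fun x => η (x + k) := by
  rw [toKernel_eq_infinitePi, toKernel_eq_infinitePi]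
  refine (infinitePi_map_comp_equiv _ (Equiv.addRight k)).trans ?_
  congr 1
  funext j
  rw [Equiv.coe_addRight, hR, hR j]
  simp only [add_assoc]

end PCA

section MarkovChain

variable {α β : Type*} [MeasurableSpace α] [MeasurableSpace β]

lemma iterLaw_succ (K : Kernel α α) (μ : Measure α) (n : ℕ) :
    iterLaw K μ (n + 1) = K ∘ₘ iterLaw K μ n := rfl

instance (K : Kernel α α) [IsMarkovKernel K] (μ : Measure α) [IsProbabilityMeasure μ] (n : ℕ) :
    IsProbabilityMeasure (iterLaw K μ n) := by
  induction n with
  | zero => assumption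
  | succ n ih => rw [iterLaw_succ]; infer_instance

lemma iterLaw_add (K : Kernel α α) (μ : Measure α) (m n : ℕ) :
    iterLaw K (iterLaw K μ m) n = iterLaw K μ (m + n) := by
  induction n with
  | zero => rfl
  | succ n ih => rw [iterLaw_succ, ih]; rfl

lemma map_iterLaw {K : Kernel α α} {L : Kernel β β} {g : α → β} (hg : Measurable g)
    (hKL : ∀ a, (K a).map g = L (g a)) (μ : Measure α) (n : ℕ) :
    (iterLaw K μ n).map g = iterLaw L (μ.map g) n := by
  induction n with
  | zero => rfl
  | succ n ih =>
    have hker : K.map g = L.comap g hg := by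
      ext1 a
      rw [Kernel.map_apply _ hg, Kernel.comap_apply, hKL]
    rw [iterLaw_succ, iterLaw_succ, Measure.map_comp _ _ hg, hker, ← ih,
      ← Measure.deterministic_comp_eq_map hg, Measure.comp_assoc,
      Kernel.comp_deterministic_eq_comap]

lemma ae_iterLaw {K : Kernel α α} {p : α → Prop} (hp : MeasurableSet {a | p a})
    (hK : ∀ a, p a → ∀ᵐ b ∂K a, p b) {μ : Measure α} (hμ : ∀ᵐ a ∂μ, p a) (n : ℕ) :
    ∀ᵐ a ∂iterLaw K μ n, p a := by
  induction n with
  | zero => exact hμ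
  | succ n ih => exact Measure.ae_comp_of_ae_ae hp (ih.mono hK)

lemma lintegral_iterLaw (K : Kernel α α) (μ : Measure α) {G : α → ℝ≥0∞} (hG : Measurable G)
    (n : ℕ) : ∫⁻ a, G a ∂iterLaw K μ n =
      ∫⁻ a, (fun H : α → ℝ≥0∞ => fun a => ∫⁻ b, H b ∂K a)^[n] G a ∂μ := by
  induction n generalizing G with
  | zero => rfl
  | succ n ih =>
    rw [iterLaw_succ, Measure.lintegral_bind K.aemeasurable hG.aemeasurable,
      ih (hG.lintegral_kernel), Function.iterate_succ_apply]

lemma lintegral_iterLaw_le_of_le_top (K : Kernel α α) [IsMarkovKernel K] {r : α → α → Prop}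
    (hK : ∀ G : α → ℝ≥0∞, Measurable G → (∀ a b, r a b → G a ≤ G b) →
      ∀ a b, r a b → ∫⁻ c, G c ∂K a ≤ ∫⁻ c, G c ∂K b)
    {top : α} (htop : ∀ a, r a top) (μ : Measure α) [IsProbabilityMeasure μ]
    {G : α → ℝ≥0∞} (hGm : Measurable G) (hG : ∀ a b, r a b → G a ≤ G b) (n : ℕ) :
    ∫⁻ a, G a ∂iterLaw K μ n ≤ ∫⁻ a, G a ∂iterLaw K (Measure.dirac top) n := by
  set T := fun H : α → ℝ≥0∞ => fun a => ∫⁻ b, H b ∂K a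
  have hT : ∀ m, Measurable (T^[m] G) ∧ ∀ a b, r a b → T^[m] G a ≤ T^[m] G b := by
    intro m
    induction m with
    | zero => exact ⟨hGm, hG⟩
    | succ m ih =>
      rw [Function.iterate_succ_apply']
      exact ⟨ih.1.lintegral_kernel, hK _ ih.1 ih.2⟩
  rw [lintegral_iterLaw K _ hGm, lintegral_iterLaw K _ hGm, lintegral_dirac' _ (hT n).1]
  calc ∫⁻ a, T^[n] G a ∂μ ≤ ∫⁻ _, T^[n] G top ∂μ := lintegral_mono fun a => (hT n).2 a top (htop a)
    _ = T^[n] G top := by rw [lintegral_const, measure_univ, mul_one]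

end MarkovChain

def Nested {ι S : Type*} [Preorder S] (ω ω' : ι → S × S) : Prop :=
  ∀ i, (ω' i).1 ≤ (ω i).1 ∧ (ω i).2 ≤ (ω' i).2

section Coupling

open Measure

variable {S : Type*} [Fintype S] [LinearOrder S] [Nonempty S] [MeasurableSpace S]

instance (μ ν : Measure S) [IsProbabilityMeasure μ] [IsProbabilityMeasure ν] :
    IsProbabilityMeasure (couple μ ν) :=
  isProbabilityMeasure_map (measurable_levyInv.prodMk measurable_levyInv).aemeasurable

lemma map_fst_couple [MeasurableSingletonClass S] (μ ν : Measure S) [IsProbabilityMeasure μ]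
    [IsProbabilityMeasure ν] :
    (couple μ ν).map Prod.fst = μ := by
  rw [couple, Measure.map_map measurable_fst (measurable_levyInv.prodMk measurable_levyInv)]
  exact map_levyInv

lemma map_snd_couple [MeasurableSingletonClass S] (μ ν : Measure S) [IsProbabilityMeasure μ]
    [IsProbabilityMeasure ν] :
    (couple μ ν).map Prod.snd = ν := by
  rw [couple, Measure.map_map measurable_snd (measurable_levyInv.prodMk measurable_levyInv)]
  exact map_levyInv

variable {ι : Type*} (μ ν : ι → Measure S) [∀ i, IsProbabilityMeasure (μ i)]
  [∀ i, IsProbabilityMeasure (ν i)]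

/-- All sites are driven by one family of independent uniforms, which turns every stochastic
comparison of couplings into a pointwise one. -/
lemma infinitePi_couple :
    infinitePi (fun i => couple (μ i) (ν i)) =
      (infinitePi fun _ : ι => volume.restrict (Ioo (0 : ℝ) 1)).map
        fun t i => (levyInv (μ i) (t i), levyInv (ν i) (t i)) :=
  (infinitePi_map_pi _ fun _ => measurable_levyInv.prodMk measurable_levyInv).symm

lemma lintegral_infinitePi_couple_mono {μ' ν' : ι → Measure S}
    [∀ i, IsProbabilityMeasure (μ' i)] [∀ i, IsProbabilityMeasure (ν' i)]
    (hμ : ∀ i s, μ i (Iic s) ≤ μ' i (Iic s)) (hν : ∀ i s, ν' i (Iic s) ≤ ν i (Iic s))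
    {G : (ι → S × S) → ℝ≥0∞} (hGm : Measurable G) (hG : ∀ ω ω', Nested ω ω' → G ω ≤ G ω') :
    ∫⁻ ω, G ω ∂infinitePi (fun i => couple (μ i) (ν i)) ≤
      ∫⁻ ω, G ω ∂infinitePi (fun i => couple (μ' i) (ν' i)) := by
  rw [infinitePi_couple, infinitePi_couple, lintegral_map hGm (by fun_prop),
    lintegral_map hGm (by fun_prop)]
  exact lintegral_mono fun t => hG _ _ fun i => ⟨levyInv_mono (hμ i) _, levyInv_mono (hν i) _⟩

variable [MeasurableSingletonClass S]

lemma map_fst_infinitePi_couple :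
    (infinitePi fun i => couple (μ i) (ν i)).map (fun ω i => (ω i).1) = infinitePi μ := by
  rw [infinitePi_map_pi _ fun _ => measurable_fst]
  simp_rw [map_fst_couple]

lemma map_snd_infinitePi_couple :
    (infinitePi fun i => couple (μ i) (ν i)).map (fun ω i => (ω i).2) = infinitePi ν := by
  rw [infinitePi_map_pi _ fun _ => measurable_snd]
  simp_rw [map_snd_couple]

omit [Nonempty S] in
lemma measurableSet_setOf_forall_le [Countable ι] :
    MeasurableSet {ω : ι → S × S | ∀ i, (ω i).1 ≤ (ω i).2} := by
  simp only [ofPred_forall]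
  exact .iInter fun i => measurableSet_setOf_apply i fun p : S × S => p.1 ≤ p.2

lemma ae_le_infinitePi_couple [Countable ι] (h : ∀ i s, ν i (Iic s) ≤ μ i (Iic s)) :
    ∀ᵐ ω ∂infinitePi (fun i => couple (μ i) (ν i)), ∀ i, (ω i).1 ≤ (ω i).2 := by
  rw [infinitePi_couple, ae_map_iff (by fun_prop) measurableSet_setOf_forall_le]
  exact ae_of_all _ fun t i => levyInv_mono (h i) _

end Coupling

section IncreasingCoupling

open Measure

variable {d : ℕ} {S : Type*} [Fintype S] [LinearOrder S] [Nonempty S] [MeasurableSpace S]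
  [MeasurableSingletonClass S]

lemma Attractive.rule_Iic_le {P : PCA d S} (hA : Attractive P) (k : Site d)
    {ζ ζ' : Config d S} (h : ζ ≤ ζ') (s : S) : P.rule k ζ' (Iic s) ≤ P.rule k ζ (Iic s) := by
  set U := {σ : Config d S | s < σ k}
  have hU : MeasurableSet U := measurableSet_setOf_apply k (s < ·)
  have hmono : Monotone (U.indicator (1 : Config d S → ℝ)) := fun σ σ' hσ => by
    by_cases hσU : σ ∈ U
    · have hσ'U : σ' ∈ U := lt_of_lt_of_le hσU (hσ k)
      rw [indicator_of_mem hσU, indicator_of_mem hσ'U]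
      exact le_rfl
    · rw [indicator_of_notMem hσU]
      exact indicator_nonneg (fun _ _ => zero_le_one) _
  have hint := hA _ (measurable_one.indicator hU) hmono
    ⟨1, fun σ => by by_cases hσ : σ ∈ U <;> simp [hσ]⟩ h
  have hrule : ∀ η, P.toKernel η U = P.rule k η (Ioi s) := fun η => by
    rw [← P.map_eval_toKernel η k,
      Measure.map_apply (measurable_pi_apply k) MeasurableSet.of_discrete]
    rfl
  simp only [integral_indicator_one hU, measureReal_def, hrule] at hint
  rw [← compl_Ioi, prob_compl_eq_one_sub MeasurableSet.of_discrete,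
    prob_compl_eq_one_sub MeasurableSet.of_discrete]
  exact tsub_le_tsub_left ((ENNReal.toReal_le_toReal (measure_ne_top _ _)
    (measure_ne_top _ _)).1 hint) 1

variable (P : PCA d S) (Q : PCA d (S × S))

/-- `Q` is the increasing coupling `P ⪯⊗ P`: each site is updated by the quantile coupling of
the two updating rules of `P`. -/
def IsIncreasingCoupling : Prop :=
  ∀ (k : Site d) (η : Config d (S × S)),
    Q.rule k η = couple (P.rule k fun x => (η x).1) (P.rule k fun x => (η x).2)

variable {P Q}

namespace IsIncreasingCoupling

variable (hQ : IsIncreasingCoupling P Q)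
include hQ

lemma toKernel_eq (η : Config d (S × S)) :
    Q.toKernel η = infinitePi fun k =>
      couple (P.rule k fun x => (η x).1) (P.rule k fun x => (η x).2) := by
  rw [Q.toKernel_eq_infinitePi]
  exact congrArg _ (funext fun k => hQ k η)

lemma map_fst_toKernel (η : Config d (S × S)) :
    (Q.toKernel η).map (fun ω x => (ω x).1) = P.toKernel fun x => (η x).1 := by
  rw [hQ.toKernel_eq, map_fst_infinitePi_couple, P.toKernel_eq_infinitePi]

lemma map_snd_toKernel (η : Config d (S × S)) :
    (Q.toKernel η).map (fun ω x => (ω x).2) = P.toKernel fun x => (η x).2 := by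
  rw [hQ.toKernel_eq, map_snd_infinitePi_couple, P.toKernel_eq_infinitePi]

lemma map_fst_iterLaw (μ : Measure (Config d (S × S))) (n : ℕ) :
    (iterLaw Q.toKernel μ n).map (fun ω x => (ω x).1) =
      iterLaw P.toKernel (μ.map fun ω x => (ω x).1) n :=
  map_iterLaw (by fun_prop) hQ.map_fst_toKernel μ n

lemma map_snd_iterLaw (μ : Measure (Config d (S × S))) (n : ℕ) :
    (iterLaw Q.toKernel μ n).map (fun ω x => (ω x).2) =
      iterLaw P.toKernel (μ.map fun ω x => (ω x).2) n :=
  map_iterLaw (by fun_prop) hQ.map_snd_toKernel μ n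

omit [MeasurableSingletonClass S] in
lemma translationInvariant (hP : TranslationInvariant P) : TranslationInvariant Q := by
  intro k η
  rw [hQ, hQ, hP k, hP k]

lemma ae_le_toKernel (hA : Attractive P) {η : Config d (S × S)} (hη : ∀ x, (η x).1 ≤ (η x).2) :
    ∀ᵐ ω ∂Q.toKernel η, ∀ x, (ω x).1 ≤ (ω x).2 := by
  rw [hQ.toKernel_eq]
  exact ae_le_infinitePi_couple _ _ fun k => hA.rule_Iic_le k hη

lemma ae_le_iterLaw (hA : Attractive P) {μ : Measure (Config d (S × S))}
    (hμ : ∀ᵐ ω ∂μ, ∀ x, (ω x).1 ≤ (ω x).2) (n : ℕ) :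
    ∀ᵐ ω ∂iterLaw Q.toKernel μ n, ∀ x, (ω x).1 ≤ (ω x).2 :=
  ae_iterLaw measurableSet_setOf_forall_le (fun _ hη => hQ.ae_le_toKernel hA hη) hμ n

lemma lintegral_toKernel_mono (hA : Attractive P) {G : Config d (S × S) → ℝ≥0∞}
    (hGm : Measurable G) (hG : ∀ ω ω', Nested ω ω' → G ω ≤ G ω') {η η' : Config d (S × S)}
    (h : Nested η η') : ∫⁻ ω, G ω ∂Q.toKernel η ≤ ∫⁻ ω, G ω ∂Q.toKernel η' := by
  rw [hQ.toKernel_eq, hQ.toKernel_eq]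
  exact lintegral_infinitePi_couple_mono _ _
    (fun k => hA.rule_Iic_le k fun x => (h x).1) (fun k => hA.rule_Iic_le k fun x => (h x).2)
    hGm hG

/-- `(−, +)` is the greatest element for `Nested`, and a strict inequality at `k` is an
increasing event. -/
lemma measure_lt_iterLaw_le (hA : Attractive P) (μ : Measure (Config d (S × S)))
    [IsProbabilityMeasure μ] (n : ℕ) (k : Site d) :
    iterLaw Q.toKernel μ n {ω | (ω k).1 < (ω k).2} ≤
      iterLaw Q.toKernel (dirac fun _ => (botS S, topS S)) n {ω | (ω k).1 < (ω k).2} := by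
  have hU := measurableSet_setOf_apply k fun p : S × S => p.1 < p.2
  rw [← lintegral_indicator_one hU, ← lintegral_indicator_one hU]
  refine lintegral_iterLaw_le_of_le_top _
    (fun G hGm hG _ _ => hQ.lintegral_toKernel_mono hA hGm hG) (fun _ _ => ⟨botS_le _, le_topS _⟩)
    μ (measurable_one.indicator hU) (fun ω ω' h => ?_) n
  by_cases hω : ω ∈ {ω : Config d (S × S) | (ω k).1 < (ω k).2}
  · have hω' : (ω' k).1 < (ω' k).2 := (h k).1.trans_lt (hω.trans_le (h k).2)
    simp [hω, hω']
  · simp [hω]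

lemma measure_ne_iterLaw_le (hA : Attractive P) (hP : TranslationInvariant P)
    {μ : Measure (Config d (S × S))} [IsProbabilityMeasure μ]
    (hμ : ∀ᵐ ω ∂μ, ∀ x, (ω x).1 ≤ (ω x).2) (n : ℕ) (k : Site d) :
    iterLaw Q.toKernel μ n {ω | (ω k).1 ≠ (ω k).2} ≤
      iterLaw Q.toKernel (dirac fun _ => (botS S, topS S)) n {ω | (ω 0).1 ≠ (ω 0).2} := by
  set μ₀ := iterLaw Q.toKernel (dirac fun _ => (botS S, topS S)) n
  have hshift : μ₀.map (fun ω x => ω (x + k)) = μ₀ := by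
    rw [map_iterLaw (by fun_prop) (Q.map_shift_toKernel (hQ.translationInvariant hP) k),
      Measure.map_dirac' (by fun_prop)]
  calc iterLaw Q.toKernel μ n {ω | (ω k).1 ≠ (ω k).2}
      ≤ iterLaw Q.toKernel μ n {ω | (ω k).1 < (ω k).2} :=
        measure_mono_ae <| (hQ.ae_le_iterLaw hA hμ n).mono fun ω hω hne =>
          lt_of_le_of_ne (hω k) hne
    _ ≤ μ₀ {ω | (ω k).1 < (ω k).2} := hQ.measure_lt_iterLaw_le hA μ n k
    _ ≤ μ₀ {ω | (ω k).1 ≠ (ω k).2} := measure_mono fun ω hω => ne_of_lt hω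
    _ = μ₀.map (fun ω x => ω (x + k)) {ω | (ω 0).1 ≠ (ω 0).2} := by
        rw [Measure.map_apply (by fun_prop)
          (measurableSet_setOf_apply 0 fun p : S × S => p.1 ≠ p.2)]
        simp
    _ = μ₀ {ω | (ω 0).1 ≠ (ω 0).2} := by rw [hshift]

end IsIncreasingCoupling

end IncreasingCoupling

section Oscillation

variable {d : ℕ} {S : Type*} {f : Config d S → ℝ} {C : ℝ}

lemma varAt_nonneg (f : Config d S → ℝ) (k : Site d) : 0 ≤ varAt f k :=
  Real.sSup_nonneg fun _ ⟨_, _, _, hr⟩ => hr ▸ abs_nonneg _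

lemma abs_sub_le_varAt (hC : ∀ x, |f x| ≤ C) {k : Site d} {σ η : Config d S}
    (h : ∀ k', k' ≠ k → σ k' = η k') : |f σ - f η| ≤ varAt f k := by
  refine le_csSup ⟨2 * C, ?_⟩ ⟨σ, η, h, rfl⟩
  rintro _ ⟨σ', η', _, rfl⟩
  linarith [abs_sub (f σ') (f η'), hC σ', hC η']

lemma abs_sub_le_sum_varAt (hC : ∀ x, |f x| ≤ C) (Δ : Finset (Site d)) {a c : Config d S}
    (h : ∀ k ∉ Δ, a k = c k) : |f a - f c| ≤ ∑ k ∈ Δ, varAt f k := by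
  classical
  induction Δ using Finset.induction generalizing a with
  | empty => simp [funext fun k => h k (Finset.notMem_empty k)]
  | @insert k Δ hk ih =>
    set b := Function.update a k (c k)
    have hab : ∀ k', k' ≠ k → a k' = b k' := fun k' hk' => (Function.update_of_ne hk' _ _).symm
    have hbc : ∀ j ∉ Δ, b j = c j := fun j hj => by
      by_cases hjk : j = k
      · subst hjk; simp [b]
      · simp only [b, Function.update_of_ne hjk]; exact h j (by simp [hjk, hj])
    calc |f a - f c| ≤ |f a - f b| + |f b - f c| := abs_sub_le _ _ _
      _ ≤ varAt f k + ∑ j ∈ Δ, varAt f j := add_le_add (abs_sub_le_varAt hC hab) (ih hbc)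
      _ = ∑ j ∈ insert k Δ, varAt f j := (Finset.sum_insert hk).symm

/-- Replacing `a` by `b` on larger and larger finite sets converges to `b` in the product
topology, so continuity lets the finite telescoping bound pass to the limit. -/
lemma abs_sub_le_tsum_varAt [TopologicalSpace S] [Finite S] (hf : Continuous f)
    (hsum : Summable (varAt f)) (a b : Config d S) :
    |f a - f b| ≤ ∑' k, {k | a k ≠ b k}.indicator (varAt f) k := by
  classical
  obtain ⟨C, hC⟩ := isCompact_univ.exists_bound_of_continuousOn hf.continuousOn
  replace hC : ∀ x, |f x| ≤ C := fun x => hC x (mem_univ x)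
  let c : Finset (Site d) → Config d S := fun I k => if k ∈ I then b k else a k
  have hc : Tendsto c atTop (𝓝 b) := tendsto_pi_nhds.2 fun k =>
    tendsto_const_nhds.congr' <| (eventually_ge_atTop {k}).mono fun I hI => by
      simp [c, Finset.singleton_subset_iff.1 hI]
  refine le_of_tendsto (((hf.tendsto b).comp hc).const_sub (f a)).abs
    (Eventually.of_forall fun I => ?_)
  calc |f a - f (c I)| ≤ ∑ k ∈ I.filter (fun k => a k ≠ b k), varAt f k :=
        abs_sub_le_sum_varAt hC _ fun k hk => by
          by_cases hkI : k ∈ I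
          · simp_all [c]
          · simp [c, hkI]
    _ = ∑ k ∈ I, {k | a k ≠ b k}.indicator (varAt f) k := by
        rw [Finset.sum_filter]
        simp [indicator_apply]
    _ ≤ ∑' k, {k | a k ≠ b k}.indicator (varAt f) k :=
        (hsum.indicator _).sum_le_tsum I fun k _ =>
          indicator_nonneg (fun k _ => varAt_nonneg f k) k

end Oscillation

section Estimate

open Measure

variable {d : ℕ} {S : Type*} [Fintype S] [MeasurableSpace S] [MeasurableSingletonClass S]
  [TopologicalSpace S] {f : Config d S → ℝ}

lemma lintegral_ofReal_abs_sub_le (hf : Continuous f) (hsum : Summable (varAt f))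
    (μ : Measure (Config d (S × S))) :
    ∫⁻ ω, ENNReal.ofReal |(f fun x => (ω x).1) - f fun x => (ω x).2| ∂μ ≤
      ∑' k, ENNReal.ofReal (varAt f k) * μ {ω | (ω k).1 ≠ (ω k).2} := by
  have hne : ∀ k, MeasurableSet {ω : Config d (S × S) | (ω k).1 ≠ (ω k).2} := fun k =>
    measurableSet_setOf_apply k fun p : S × S => p.1 ≠ p.2
  have hpt : ∀ ω : Config d (S × S),
      ENNReal.ofReal |(f fun x => (ω x).1) - f fun x => (ω x).2| ≤
        ∑' k, ENNReal.ofReal (varAt f k) * {ω' | (ω' k).1 ≠ (ω' k).2}.indicator 1 ω := by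
    intro ω
    refine (ENNReal.ofReal_le_ofReal (abs_sub_le_tsum_varAt hf hsum _ _)).trans_eq ?_
    rw [ENNReal.ofReal_tsum_of_nonneg (fun k => indicator_nonneg (fun k _ => varAt_nonneg f k) k)
      (hsum.indicator _)]
    refine tsum_congr fun k => ?_
    by_cases h : (ω k).1 = (ω k).2 <;> simp [h]
  refine (lintegral_mono hpt).trans_eq ?_
  rw [lintegral_tsum fun k => ((measurable_one.indicator (hne k)).const_mul _).aemeasurable]
  exact tsum_congr fun k => by
    rw [lintegral_const_mul _ (measurable_one.indicator (hne k)), lintegral_indicator_one (hne k)]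

lemma abs_integral_map_fst_sub_snd_le [DiscreteTopology S] (hf : Continuous f)
    (hsum : Summable (varAt f))
    (μ : Measure (Config d (S × S))) [IsProbabilityMeasure μ] {r : ℝ}
    (hr : ∀ k, μ.real {ω | (ω k).1 ≠ (ω k).2} ≤ r) :
    |∫ σ, f σ ∂μ.map (fun ω x => (ω x).1) - ∫ σ, f σ ∂μ.map (fun ω x => (ω x).2)| ≤
      (∑' k, varAt f k) * r := by
  have hfst : Measurable fun ω : Config d (S × S) => fun x => (ω x).1 := by fun_prop
  have hsnd : Measurable fun ω : Config d (S × S) => fun x => (ω x).2 := by fun_prop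
  have hfst' : Continuous fun ω : Config d (S × S) => f fun x => (ω x).1 := by fun_prop
  have hsnd' : Continuous fun ω : Config d (S × S) => f fun x => (ω x).2 := by fun_prop
  have hr0 : 0 ≤ r := measureReal_nonneg.trans (hr 0)
  have hlint : ∫⁻ ω, ENNReal.ofReal |(f fun x => (ω x).1) - f fun x => (ω x).2| ∂μ ≤
      ENNReal.ofReal (∑' k, varAt f k) * ENNReal.ofReal r := by
    refine (lintegral_ofReal_abs_sub_le hf hsum μ).trans ?_
    rw [ENNReal.ofReal_tsum_of_nonneg (varAt_nonneg f) hsum, ← ENNReal.tsum_mul_right]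
    exact ENNReal.tsum_le_tsum fun k => mul_le_mul_right
      ((ENNReal.le_ofReal_iff_toReal_le (measure_ne_top μ _) hr0).2 (hr k)) _
  rw [integral_map hfst.aemeasurable hf.aestronglyMeasurable,
    integral_map hsnd.aemeasurable hf.aestronglyMeasurable,
    ← integral_sub (hfst'.integrable_of_hasCompactSupport (.of_compactSpace _))
      (hsnd'.integrable_of_hasCompactSupport (.of_compactSpace _))]
  calc _ ≤ (∫⁻ ω, ENNReal.ofReal |(f fun x => (ω x).1) - f fun x => (ω x).2| ∂μ).toReal := by
        simpa only [Real.norm_eq_abs] using norm_integral_le_lintegral_norm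
          (μ := μ) fun ω => (f fun x => (ω x).1) - f fun x => (ω x).2
    _ ≤ (ENNReal.ofReal (∑' k, varAt f k) * ENNReal.ofReal r).toReal :=
        ENNReal.toReal_mono (by finiteness) hlint
    _ = (∑' k, varAt f k) * r := by
        rw [ENNReal.toReal_mul, ENNReal.toReal_ofReal (tsum_nonneg (varAt_nonneg f)),
          ENNReal.toReal_ofReal hr0]

end Estimate

theorem abs_integral_iterLaw_sub_top_le {d : ℕ} {S : Type*} [Fintype S] [LinearOrder S]
    [Nonempty S] [MeasurableSpace S] [MeasurableSingletonClass S] [TopologicalSpace S]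
    [DiscreteTopology S] {P : PCA d S} {Q : PCA d (S × S)} (hA : Attractive P)
    (hP : TranslationInvariant P) (hQ : IsIncreasingCoupling P Q) {f : Config d S → ℝ}
    (hf : Continuous f) (hsum : Summable (varAt f)) (μ : Measure (Config d S))
    [IsProbabilityMeasure μ] (n : ℕ) :
    |∫ x, f x ∂iterLaw P.toKernel μ n - ∫ x, f x ∂iterLaw P.toKernel (.dirac fun _ => topS S) n| ≤
      (∑' k, varAt f k) * (iterLaw Q.toKernel (.dirac fun _ => (botS S, topS S)) n
        {ω | (ω 0).1 ≠ (ω 0).2}).toReal := by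
  have hpair : Measurable fun (σ : Config d S) (x : Site d) => (σ x, topS S) := by fun_prop
  set μ₀ := μ.map fun σ x => (σ x, topS S)
  have : IsProbabilityMeasure μ₀ := Measure.isProbabilityMeasure_map hpair.aemeasurable
  have hord : ∀ᵐ ω ∂μ₀, ∀ x, (ω x).1 ≤ (ω x).2 :=
    (ae_map_iff hpair.aemeasurable measurableSet_setOf_forall_le).2
      (ae_of_all _ fun σ x => le_topS _)
  have hfst : μ₀.map (fun ω x => (ω x).1) = μ := by
    rw [Measure.map_map (by fun_prop) hpair]
    exact Measure.map_id
  have hsnd : μ₀.map (fun ω x => (ω x).2) = .dirac fun _ => topS S := by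
    rw [Measure.map_map (by fun_prop) hpair]
    exact (Measure.map_const μ (fun _ : Site d => topS S)).trans
      (by rw [measure_univ, one_smul])
  have h := abs_integral_map_fst_sub_snd_le hf hsum (iterLaw Q.toKernel μ₀ n) fun k =>
    ENNReal.toReal_mono (measure_ne_top _ _) (hQ.measure_ne_iterLaw_le hA hP hord n k)
  rwa [hQ.map_fst_iterLaw, hQ.map_snd_iterLaw, hfst, hsnd] at h

theorem stmt17_general {d : ℕ}
    {S : Type} [Fintype S] [LinearOrder S] [Nonempty S]
    [MeasurableSpace S] [MeasurableSingletonClass S]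
    [TopologicalSpace S] [DiscreteTopology S]
    (P : PCA d S) (hA : Attractive P) (hTI : TranslationInvariant P)
    (ν : Measure (Config d S))
    (herg : ∀ σ : Config d S, ∀ f : BoundedContinuousFunction (Config d S) ℝ,
      Tendsto (fun n => ∫ x, f x ∂iterLaw P.toKernel (Measure.dirac σ) n)
        atTop (nhds (∫ x, f x ∂ν)))
    (Q : PCA d (S × S))
    (hQ : ∀ (k : Site d) (η : Config d (S × S)),
      Q.rule k η = couple (P.rule k fun x => (η x).1) (P.rule k fun x => (η x).2))
    (f : Config d S → ℝ) (hf : Continuous f) (hsum : Summable fun k : Site d => varAt f k)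
    (n : ℕ) (σ : Config d S) :
    |(∫ x, f x ∂iterLaw P.toKernel (Measure.dirac σ) n) - ∫ x, f x ∂ν| ≤
      2 * (∑' k : Site d, varAt f k) *
        (iterLaw Q.toKernel (Measure.dirac fun _ => (botS S, topS S)) n
          {ω : Config d (S × S) | (ω 0).1 ≠ (ω 0).2}).toReal := by
  set ρ := (iterLaw Q.toKernel (Measure.dirac fun _ => (botS S, topS S)) n
    {ω : Config d (S × S) | (ω 0).1 ≠ (ω 0).2}).toReal
  set top : Measure (Config d S) := Measure.dirac fun _ => topS S
  have hσ := abs_integral_iterLaw_sub_top_le hA hTI hQ hf hsum (Measure.dirac σ) n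
  have hν : |∫ x, f x ∂ν - ∫ x, f x ∂iterLaw P.toKernel top n| ≤ (∑' k, varAt f k) * ρ := by
    have hlim := (herg (fun _ => topS S) (BoundedContinuousFunction.mkOfCompact ⟨f, hf⟩)).comp
      (tendsto_add_atTop_nat n)
    refine le_of_tendsto ((hlim.sub_const _).abs) (Eventually.of_forall fun m => ?_)
    have hm := abs_integral_iterLaw_sub_top_le hA hTI hQ hf hsum (iterLaw P.toKernel top m) n
    rwa [iterLaw_add] at hm
  linarith [abs_sub_le (∫ x, f x ∂iterLaw P.toKernel (Measure.dirac σ) n)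
    (∫ x, f x ∂iterLaw P.toKernel top n) (∫ x, f x ∂ν), abs_sub_comm (∫ x, f x ∂ν)
    (∫ x, f x ∂iterLaw P.toKernel top n)]

/-- Exponential-type ergodicity bound: for an ergodic attractive
translation-invariant PCA with unique stationary measure `ν`, the deviation of the law
at time `n` from `ν` tested against `f` is bounded by `2 |||f||| ρ(n)`. -/
theorem stmt17 {d : ℕ} (hd : 1 ≤ d)
    {S : Type} [Fintype S] [LinearOrder S] [Nonempty S]
    [MeasurableSpace S] [MeasurableSingletonClass S]
    [TopologicalSpace S] [DiscreteTopology S]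
    (P : PCA d S) (hA : Attractive P) (hTI : TranslationInvariant P)
    (ν : Measure (Config d S)) (hν : IsProbabilityMeasure ν)
    (herg : ∀ σ : Config d S, ∀ f : BoundedContinuousFunction (Config d S) ℝ,
      Tendsto (fun n => ∫ x, f x ∂iterLaw P.toKernel (Measure.dirac σ) n)
        atTop (nhds (∫ x, f x ∂ν)))
    (Q : PCA d (S × S))
    (hQ : ∀ (k : Site d) (η : Config d (S × S)),
      Q.rule k η = couple (P.rule k fun x => (η x).1) (P.rule k fun x => (η x).2))
    (f : Config d S → ℝ) (hf : Continuous f) (hsum : Summable fun k : Site d => varAt f k)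
    (n : ℕ) (hn : 1 ≤ n) (σ : Config d S) :
    |(∫ x, f x ∂iterLaw P.toKernel (Measure.dirac σ) n) - ∫ x, f x ∂ν| ≤
      2 * (∑' k : Site d, varAt f k) *
        (iterLaw Q.toKernel (Measure.dirac fun _ => (botS S, topS S)) n
          {ω : Config d (S × S) | (ω 0).1 ≠ (ω 0).2}).toReal :=
  stmt17_general P hA hTI ν herg Q hQ f hf hsum n σ
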